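/- Let T be a finite-dimensional real vector space and let Φ : T → T → T → T → ℝ be multilinear, symmetric in the first pair, symmetric in the last pair, and symmetric under swapping the two pairs. Define E(X,Y,Z,W) = (1/3)(Φ(X,Y,Z,W) + Φ(Y,Z,X,W) + Φ(Z,X,Y,W)) and R(X,Y,Z,W) = Φ(X,Z,Y,W) − Φ(X,W,Y,Z). Then Φ(X,Y,Z,W) = E(X,Y,Z,W) + (1/3)(R(X,Z,Y,W) + R(X,W,Y,Z)) for all X,Y,Z,W, and E is fully symmetric in all four arguments. -/

import Mathlib

/-!
Write `C Φ (X,Y,Z,W) = Φ(X,Y,Z,W) + Φ(Y,Z,X,W) + Φ(Z,X,Y,W)`, so that `E = C Φ / 3`. Symmetry in the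
first pair makes `C Φ` symmetric in its first three arguments; the pair swap moves the fourth slot
into the first pair, where symmetry in the last pair lets it trade places with the third. The
symmetries also identify the two cyclic terms of `C Φ` with the two positive terms of
`R(X,Z,Y,W) + R(X,W,Y,Z)`, while its two negative terms are `-Φ(X,Y,Z,W)` twice; hence
`C Φ + R(X,Z,Y,W) + R(X,W,Y,Z) = 3 Φ`.
-/

namespace PairSymmetric

variable {α R : Type*} [CommRing R]

def cyclicSum (Φ : α → α → α → α → R) (X Y Z W : α) : R :=
  Φ X Y Z W + Φ Y Z X W + Φ Z X Y W

def curvaturePart (Φ : α → α → α → α → R) (X Y Z W : α) : R :=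
  Φ X Z Y W - Φ X W Y Z

theorem cyclicSum_swap_12 {Φ : α → α → α → α → R}
    (h1 : ∀ X Y Z W, Φ X Y Z W = Φ Y X Z W) (X Y Z W : α) :
    cyclicSum Φ X Y Z W = cyclicSum Φ Y X Z W := by
  simp only [cyclicSum, h1 Y X Z W, h1 X Z Y W, h1 Z Y X W]
  ring

theorem cyclicSum_swap_23 {Φ : α → α → α → α → R}
    (h1 : ∀ X Y Z W, Φ X Y Z W = Φ Y X Z W) (X Y Z W : α) :
    cyclicSum Φ X Y Z W = cyclicSum Φ X Z Y W := by
  simp only [cyclicSum, h1 X Z Y W, h1 Z Y X W, h1 Y X Z W]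
  ring

theorem cyclicSum_swap_34 {Φ : α → α → α → α → R}
    (h1 : ∀ X Y Z W, Φ X Y Z W = Φ Y X Z W) (h2 : ∀ X Y Z W, Φ X Y Z W = Φ X Y W Z)
    (h3 : ∀ X Y Z W, Φ X Y Z W = Φ Z W X Y) (X Y Z W : α) :
    cyclicSum Φ X Y Z W = cyclicSum Φ X Y W Z := by
  have hYW : Φ Y W X Z = Φ Z X Y W := by rw [h2, h3]
  have hWX : Φ W X Y Z = Φ Y Z X W := by rw [h1, h3]
  simp only [cyclicSum, hYW, hWX, ← h2 X Y Z W]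
  ring

theorem cyclicSum_add_curvaturePart {Φ : α → α → α → α → R}
    (h1 : ∀ X Y Z W, Φ X Y Z W = Φ Y X Z W) (h2 : ∀ X Y Z W, Φ X Y Z W = Φ X Y W Z)
    (h3 : ∀ X Y Z W, Φ X Y Z W = Φ Z W X Y) (X Y Z W : α) :
    cyclicSum Φ X Y Z W + (curvaturePart Φ X Z Y W + curvaturePart Φ X W Y Z) = 3 * Φ X Y Z W := by
  have hYZ : Φ Y Z X W = Φ X W Z Y := by rw [h3, h2]
  have hZX : Φ Z X Y W = Φ X Z W Y := by rw [h1, h2]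
  simp only [cyclicSum, curvaturePart, hYZ, hZX, ← h2 X Y Z W]
  ring

end PairSymmetric

open PairSymmetric in
theorem phi_decomposition_and_E_symmetric_general
    {T : Type*} [AddCommGroup T] [Module ℝ T]
    (Φ : T →ₗ[ℝ] T →ₗ[ℝ] T →ₗ[ℝ] T →ₗ[ℝ] ℝ)
    (h1 : ∀ X Y Z W : T, Φ X Y Z W = Φ Y X Z W)
    (h2 : ∀ X Y Z W : T, Φ X Y Z W = Φ X Y W Z)
    (h3 : ∀ X Y Z W : T, Φ X Y Z W = Φ Z W X Y)
    (E R : T → T → T → T → ℝ)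
    (hE : ∀ X Y Z W : T,
      E X Y Z W = (1/3) * (Φ X Y Z W + Φ Y Z X W + Φ Z X Y W))
    (hR : ∀ X Y Z W : T, R X Y Z W = Φ X Z Y W - Φ X W Y Z) :
    (∀ X Y Z W : T,
      Φ X Y Z W = E X Y Z W + (1/3) * (R X Z Y W + R X W Y Z)) ∧
    (∀ X Y Z W : T,
      E X Y Z W = E Y X Z W ∧ E X Y Z W = E X Z Y W ∧ E X Y Z W = E X Y W Z) := by
  set φ : T → T → T → T → ℝ := fun X Y Z W => Φ X Y Z W
  have hE' : E = fun X Y Z W => (1/3) * cyclicSum φ X Y Z W := by ext; exact hE ..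
  have hR' : R = curvaturePart φ := by ext; exact hR ..
  subst hE' hR'
  refine ⟨fun X Y Z W => ?_, fun X Y Z W => ⟨?_, ?_, ?_⟩⟩ <;> dsimp only
  · linear_combination (-1/3 : ℝ) * cyclicSum_add_curvaturePart (Φ := φ) h1 h2 h3 X Y Z W
  · rw [cyclicSum_swap_12 (Φ := φ) h1]
  · rw [cyclicSum_swap_23 (Φ := φ) h1]
  · rw [cyclicSum_swap_34 (Φ := φ) h1 h2 h3]

theorem phi_decomposition_and_E_symmetric
    {T : Type*} [AddCommGroup T] [Module ℝ T] [FiniteDimensional ℝ T]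
    (Φ : T →ₗ[ℝ] T →ₗ[ℝ] T →ₗ[ℝ] T →ₗ[ℝ] ℝ)
    (h1 : ∀ X Y Z W : T, Φ X Y Z W = Φ Y X Z W)
    (h2 : ∀ X Y Z W : T, Φ X Y Z W = Φ X Y W Z)
    (h3 : ∀ X Y Z W : T, Φ X Y Z W = Φ Z W X Y)
    (E R : T → T → T → T → ℝ)
    (hE : ∀ X Y Z W : T,
      E X Y Z W = (1/3) * (Φ X Y Z W + Φ Y Z X W + Φ Z X Y W))
    (hR : ∀ X Y Z W : T, R X Y Z W = Φ X Z Y W - Φ X W Y Z) :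
    (∀ X Y Z W : T,
      Φ X Y Z W = E X Y Z W + (1/3) * (R X Z Y W + R X W Y Z)) ∧
    (∀ X Y Z W : T,
      E X Y Z W = E Y X Z W ∧ E X Y Z W = E X Z Y W ∧ E X Y Z W = E X Y W Z) :=
  phi_decomposition_and_E_symmetric_general Φ h1 h2 h3 E R hE hR
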